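/- In Y_{m|n}[[u^{-1}, v^{-1}]] one has, for every i = 1,…,m+n−1 and every l ≥ 0, the identity (u−v)[e_i(u), (e_i(v) − e_i(u))^l] = (−1)^{|i+1|} l (e_i(v) − e_i(u))^{l+1} = (−1)^{|i|} l (e_i(v) − e_i(u))^{l+1}. -/

import Mathlib

/-!
Write `E = e(u)`, `F = e(v)`, `D = F - E` and `σ = (-1)^{|i|+|i+1|}`. Since `e_0 = 0`, the
supercommutator `S = E F - σ F E` is divisible by `u⁻¹ v⁻¹`, and on such series multiplication by
`u - v` is multiplication by `v⁻¹ - u⁻¹` after dividing by `u⁻¹ v⁻¹`, hence commutes with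
multiplication on either side. Comparing the relation at `(a, b)` and `(b, a)`, where its left side
changes by the factor `σ` and `(E - F)²` is symmetric, gives `(1 - σ) D² = 0`; hence
`(1 - σ) E² = 0`, i.e. `E D - σ D E = S`. The identity
`E D^{l+1} - σ^{l+1} D^{l+1} E = (E D^l - σ^l D^l E) D + σ^l D^l (E D - σ D E)`
then proves the claim by induction on `l`, the factors `σ^l` being absorbed by `(1 - σ) D² = 0`.
The same fact makes the signs `(-1)^{|i+1|}` and `(-1)^{|i|} = σ (-1)^{|i+1|}` interchangeable.
-/

/-- the series Σ_r f r · u^{-r}, viewed in A[[u^{-1}, v^{-1}]] (variable 0 is u^{-1},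
variable 1 is v^{-1}). -/
noncomputable def inU {A : Type*} [Semiring A] (f : ℕ → A) : MvPowerSeries (Fin 2) A :=
  fun d => if d 1 = 0 then f (d 0) else 0

/-- the series Σ_r f r · v^{-r} in A[[u^{-1}, v^{-1}]]. -/
noncomputable def inV {A : Type*} [Semiring A] (f : ℕ → A) : MvPowerSeries (Fin 2) A :=
  fun d => if d 0 = 0 then f (d 1) else 0

/-- coefficient of u^{-a} v^{-b}. -/
noncomputable def cf2 {A : Type*} [Semiring A] (F : MvPowerSeries (Fin 2) A) (a b : ℕ) : A :=
  MvPowerSeries.coeff (R := A) (Finsupp.single (0 : Fin 2) a + Finsupp.single 1 b) F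

/-- 1-based parity: |i| = 0 for 1 ≤ i ≤ m, |i| = 1 for i > m. -/
def pnat (m i : ℕ) : ℕ := if i ≤ m then 0 else 1

open MvPowerSeries Finsupp Finset.HasAntidiagonal

section RingLemmas

theorem pow_smul_eq_self_of_sub_smul_eq_zero {M : Type*} [AddCommGroup M] {σ : ℤ} {y : M}
    (h : (1 - σ) • y = 0) (k : ℕ) : σ ^ k • y = y := by
  have hσ : σ • y = y := by rwa [sub_smul, one_smul, sub_eq_zero, eq_comm] at h
  induction k with
  | zero => simp
  | succ k ih => rw [pow_succ, mul_smul, hσ, ih]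

variable {R : Type*} [Ring R]

theorem pow_smul_pow_add_two {d : R} {σ : ℤ} (h : (1 - σ) • (d * d) = 0) (k l : ℕ) :
    σ ^ k • d ^ (l + 2) = d ^ (l + 2) := by
  rw [pow_add, sq, ← mul_smul_comm, pow_smul_eq_self_of_sub_smul_eq_zero h]

theorem mul_pow_succ_sub_smul_pow_succ_mul (x d : R) (σ : ℤ) (l : ℕ) :
    x * d ^ (l + 1) - σ ^ (l + 1) • (d ^ (l + 1) * x) =
      (x * d ^ l - σ ^ l • (d ^ l * x)) * d + σ ^ l • (d ^ l * (x * d - σ • (d * x))) := by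
  simp only [pow_succ, sub_mul, mul_sub, smul_sub, smul_mul_assoc, mul_smul_comm, smul_smul,
    mul_assoc]
  abel

theorem mul_mul_natCast_smul_pow_succ {d : R} {σ : ℤ} (h : (1 - σ) • (d * d) = 0) (c : ℤ)
    (l : ℕ) : (c * σ * l) • d ^ (l + 1) = (c * l) • d ^ (l + 1) := by
  cases l with
  | zero => simp
  | succ l => rw [mul_right_comm, mul_smul, ← pow_one σ, pow_smul_pow_add_two h]

end RingLemmas

theorem MvPowerSeries.X_mul_X_dvd_mul {σ R : Type*} [Semiring R] {i j : σ}
    {x y : MvPowerSeries σ R} (hx : X i ∣ x) (hy : X j ∣ y) : X i * X j ∣ x * y := by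
  obtain ⟨x', rfl⟩ := hx
  obtain ⟨y', rfl⟩ := hy
  exact ⟨x' * y', by rw [mul_assoc, ← mul_assoc x', (commute_X x' j).eq, mul_assoc, mul_assoc]⟩

section Series

variable {A : Type*} [Ring A]

theorem single_zero_add_single_one (d : Fin 2 →₀ ℕ) : single 0 (d 0) + single 1 (d 1) = d := by
  ext x; fin_cases x <;> simp

theorem ext_cf2 {X Y : MvPowerSeries (Fin 2) A} (h : ∀ a b, cf2 X a b = cf2 Y a b) : X = Y :=
  MvPowerSeries.ext fun d => by simpa [cf2, single_zero_add_single_one] using h (d 0) (d 1)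

@[simp]
theorem cf2_inU (f : ℕ → A) (a b : ℕ) : cf2 (inU f) a b = if b = 0 then f a else 0 := by
  simp [cf2, inU, coeff_apply]

@[simp]
theorem cf2_inV (f : ℕ → A) (a b : ℕ) : cf2 (inV f) a b = if a = 0 then f b else 0 := by
  simp [cf2, inV, coeff_apply]

@[simp]
theorem cf2_add (X Y : MvPowerSeries (Fin 2) A) (a b : ℕ) :
    cf2 (X + Y) a b = cf2 X a b + cf2 Y a b :=
  map_add _ X Y

@[simp]
theorem cf2_zero (a b : ℕ) : cf2 (0 : MvPowerSeries (Fin 2) A) a b = 0 :=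
  map_zero _

@[simp]
theorem cf2_sub (X Y : MvPowerSeries (Fin 2) A) (a b : ℕ) :
    cf2 (X - Y) a b = cf2 X a b - cf2 Y a b :=
  map_sub _ X Y

@[simp]
theorem cf2_zsmul (n : ℤ) (X : MvPowerSeries (Fin 2) A) (a b : ℕ) :
    cf2 (n • X) a b = n • cf2 X a b :=
  map_zsmul _ n X

theorem coeff_inU_eq_zero_or_coeff_inV_eq_zero {f g : ℕ → A} {a b : ℕ}
    {p : (Fin 2 →₀ ℕ) × (Fin 2 →₀ ℕ)} (hp : p ∈ antidiagonal (single 0 a + single 1 b))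
    (hne : p ≠ (single 0 a, single 1 b)) : coeff p.1 (inU f) = 0 ∨ coeff p.2 (inV g) = 0 := by
  by_cases h₁ : p.1 1 = 0
  · by_cases h₂ : p.2 0 = 0
    · refine absurd ?_ hne
      rw [mem_antidiagonal] at hp
      have h₀ := DFunLike.congr_fun hp 0
      have h₁' := DFunLike.congr_fun hp 1
      simp only [coe_add, Pi.add_apply] at h₀ h₁'
      ext x <;> fin_cases x <;> simp at * <;> omega
    · exact .inr (by simp [inV, coeff_apply, h₂])
  · exact .inl (by simp [inU, coeff_apply, h₁])

theorem cf2_inU_mul_inV (f g : ℕ → A) (a b : ℕ) : cf2 (inU f * inV g) a b = f a * g b := by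
  rw [cf2, coeff_mul, Finset.sum_eq_single_of_mem (single 0 a, single 1 b) (by simp)]
  · simp [inU, inV, coeff_apply]
  · intro p hp hne
    rcases coeff_inU_eq_zero_or_coeff_inV_eq_zero (f := f) (g := g) hp hne with h | h <;> simp [h]

theorem cf2_inV_mul_inU (f g : ℕ → A) (a b : ℕ) : cf2 (inV g * inU f) a b = g b * f a := by
  rw [cf2, coeff_mul, sum_antidiagonal_swap _ (fun x y => coeff x (inV g) * coeff y (inU f)),
    Finset.sum_eq_single_of_mem (single 0 a, single 1 b) (by simp)]
  · simp [inU, inV, coeff_apply]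
  · intro p hp hne
    rcases coeff_inU_eq_zero_or_coeff_inV_eq_zero (f := f) (g := g) hp hne with h | h <;> simp [h]

theorem inU_mul_inU (f g : ℕ → A) :
    inU f * inU g = inU (fun n => ∑ x ∈ antidiagonal n, f x.1 * g x.2) := by
  ext d
  rw [coeff_mul]
  by_cases hd : d 1 = 0
  · obtain ⟨a, rfl⟩ : ∃ a, d = single 0 a := ⟨d 0, by ext x; fin_cases x <;> simp [hd]⟩
    simp [Finsupp.antidiagonal_single, inU, coeff_apply]
  · refine (Finset.sum_eq_zero fun p hp => ?_).trans (by simp [inU, coeff_apply, hd])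
    have h := DFunLike.congr_fun (mem_antidiagonal.mp hp) 1
    simp only [coe_add, Pi.add_apply] at h
    by_cases h₁ : p.1 1 = 0
    · simp [inU, coeff_apply, show p.2 1 ≠ 0 by omega]
    · simp [inU, coeff_apply, h₁]

theorem inV_mul_inV (f g : ℕ → A) :
    inV f * inV g = inV (fun n => ∑ x ∈ antidiagonal n, f x.1 * g x.2) := by
  ext d
  rw [coeff_mul]
  by_cases hd : d 0 = 0
  · obtain ⟨b, rfl⟩ : ∃ b, d = single 1 b := ⟨d 1, by ext x; fin_cases x <;> simp [hd]⟩
    simp [Finsupp.antidiagonal_single, inV, coeff_apply]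
  · refine (Finset.sum_eq_zero fun p hp => ?_).trans (by simp [inV, coeff_apply, hd])
    have h := DFunLike.congr_fun (mem_antidiagonal.mp hp) 0
    simp only [coe_add, Pi.add_apply] at h
    by_cases h₁ : p.1 0 = 0
    · simp [inV, coeff_apply, show p.2 0 ≠ 0 by omega]
    · simp [inV, coeff_apply, h₁]

theorem X_zero_dvd_inU {f : ℕ → A} (hf : f 0 = 0) : X 0 ∣ inU f :=
  X_dvd_iff.mpr fun d hd => by simp [inU, coeff_apply, hd, hf]

theorem X_one_dvd_inV {f : ℕ → A} (hf : f 0 = 0) : X 1 ∣ inV f :=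
  X_dvd_iff.mpr fun d hd => by simp [inV, coeff_apply, hd, hf]

/-- Multiplication by `u - v`, keeping only the nonpositive powers of `u` and `v`: the coefficient
of `u^{-a} v^{-b}` of `(u - v) F` is `F_{a+1,b} - F_{a,b+1}`. -/
noncomputable def mulUSubV : MvPowerSeries (Fin 2) A →+ MvPowerSeries (Fin 2) A where
  toFun F d := coeff (d + single 0 1) F - coeff (d + single 1 1) F
  map_zero' := MvPowerSeries.ext fun _ => by change (_ : A) - _ = 0; simp
  map_add' F G := MvPowerSeries.ext fun _ => by
    change (_ : A) - _ = (_ - _) + (_ - _); simp only [map_add]; abel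

theorem coeff_mulUSubV (F : MvPowerSeries (Fin 2) A) (d : Fin 2 →₀ ℕ) :
    coeff d (mulUSubV F) = coeff (d + single 0 1) F - coeff (d + single 1 1) F :=
  rfl

theorem cf2_mulUSubV (F : MvPowerSeries (Fin 2) A) (a b : ℕ) :
    cf2 (mulUSubV F) a b = cf2 F (a + 1) b - cf2 F a (b + 1) := by
  rw [cf2, cf2, cf2, coeff_mulUSubV, single_add, single_add,
    add_right_comm _ (single 1 b) (single 0 1)]
  simp only [add_assoc]

theorem mulUSubV_X_mul_X_mul (W : MvPowerSeries (Fin 2) A) :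
    mulUSubV (X 0 * X 1 * W) = (X 1 - X 0) * W := by
  ext d
  have h₀ : single (0 : Fin 2) 1 + single 1 1 ≤ d + single 0 1 ↔ single 1 1 ≤ d := by
    rw [add_comm (single 0 1), add_le_add_iff_right]
  have h₁ : single (0 : Fin 2) 1 + single 1 1 ≤ d + single 1 1 ↔ single 0 1 ≤ d :=
    add_le_add_iff_right _
  rw [coeff_mulUSubV, X_def, X_def, monomial_mul_monomial, one_mul, coeff_monomial_mul,
    coeff_monomial_mul, sub_mul, map_sub, coeff_monomial_mul, coeff_monomial_mul,
    add_comm (single 0 1) (single 1 1), add_tsub_add_eq_tsub_right, add_comm (single 1 1),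
    add_tsub_add_eq_tsub_right]
  simp only [h₀, h₁]

theorem X_mul_X_dvd_mul_left {Z : MvPowerSeries (Fin 2) A} (hZ : X 0 * X 1 ∣ Z)
    (Y : MvPowerSeries (Fin 2) A) : X 0 * X 1 ∣ Y * Z := by
  obtain ⟨W, rfl⟩ := hZ
  exact ⟨Y * W, by rw [← mul_assoc, ((commute_X Y 0).mul_right (commute_X Y 1)).eq, mul_assoc]⟩

theorem mulUSubV_mul_left {Z : MvPowerSeries (Fin 2) A} (hZ : X 0 * X 1 ∣ Z)
    (Y : MvPowerSeries (Fin 2) A) : mulUSubV (Y * Z) = Y * mulUSubV Z := by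
  obtain ⟨W, rfl⟩ := hZ
  rw [← mul_assoc, ((commute_X Y 0).mul_right (commute_X Y 1)).eq, mul_assoc,
    mulUSubV_X_mul_X_mul, mulUSubV_X_mul_X_mul, ← mul_assoc, ← mul_assoc,
    ((commute_X Y 1).sub_right (commute_X Y 0)).eq]

theorem mulUSubV_mul_right {Z : MvPowerSeries (Fin 2) A} (hZ : X 0 * X 1 ∣ Z)
    (Y : MvPowerSeries (Fin 2) A) : mulUSubV (Z * Y) = mulUSubV Z * Y := by
  obtain ⟨W, rfl⟩ := hZ
  rw [mul_assoc, mulUSubV_X_mul_X_mul, mulUSubV_X_mul_X_mul, mul_assoc]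

theorem mulUSubV_mul_pow_sub_smul_pow_mul {x d : MvPowerSeries (Fin 2) A} {σ c : ℤ}
    (hdvd : X 0 * X 1 ∣ x * d - σ • (d * x))
    (hrel : mulUSubV (x * d - σ • (d * x)) = c • (d * d))
    (hσ : (1 - σ) • (d * d) = 0) (l : ℕ) :
    X 0 * X 1 ∣ x * d ^ l - σ ^ l • (d ^ l * x) ∧
      mulUSubV (x * d ^ l - σ ^ l • (d ^ l * x)) = (c * l) • d ^ (l + 1) := by
  induction l with
  | zero => simp
  | succ l ih =>
    obtain ⟨hdvd_l, hrel_l⟩ := ih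
    rw [mul_pow_succ_sub_smul_pow_succ_mul]
    refine ⟨dvd_add (hdvd_l.mul_right d) (dvd_zsmul_of_dvd _ (X_mul_X_dvd_mul_left hdvd _)), ?_⟩
    rw [map_add, map_zsmul, mulUSubV_mul_right hdvd_l, hrel_l, mulUSubV_mul_left hdvd, hrel,
      smul_mul_assoc, ← pow_succ, mul_smul_comm, ← sq, ← pow_add, smul_comm,
      pow_smul_pow_add_two hσ]
    push_cast
    rw [mul_add, mul_one, add_smul]

theorem cf2_inV_mul_inV (f g : ℕ → A) (a b : ℕ) :
    cf2 (inV f * inV g) a b = cf2 (inU f * inU g) b a := by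
  simp [inU_mul_inU, inV_mul_inV]

theorem cf2_inV_sub_inU_mul_self (e : ℕ → A) (a b : ℕ) :
    cf2 ((inV e - inU e) * (inV e - inU e)) a b =
      cf2 (inU e * inU e) a b - e a * e b - e b * e a + cf2 (inU e * inU e) b a := by
  have h : (inV e - inU e) * (inV e - inU e) =
      inU e * inU e - inU e * inV e - inV e * inU e + inV e * inV e := by
    noncomm_ring
  simp only [h, cf2_add, cf2_sub, cf2_inU_mul_inV, cf2_inV_mul_inU, cf2_inV_mul_inV]

theorem cf2_inV_sub_inU_mul_self_comm (e : ℕ → A) (a b : ℕ) :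
    cf2 ((inV e - inU e) * (inV e - inU e)) b a =
      cf2 ((inV e - inU e) * (inV e - inU e)) a b := by
  simp only [cf2_inV_sub_inU_mul_self]
  abel

theorem cf2_inU_mul_inV_sub_smul_comm {σ : ℤ} (hσ : σ * σ = 1) (e : ℕ → A) (a b : ℕ) :
    cf2 (inU e * inV e - σ • (inV e * inU e)) b a =
      -σ • cf2 (inU e * inV e - σ • (inV e * inU e)) a b := by
  simp only [cf2_sub, cf2_zsmul, cf2_inU_mul_inV, cf2_inV_mul_inU]
  rw [smul_sub, smul_smul, neg_mul, hσ, neg_smul, neg_smul, one_smul]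
  abel

theorem one_sub_smul_inV_sub_inU_mul_self_eq_zero {e : ℕ → A} {σ c : ℤ} (hσ : σ * σ = 1)
    (hc : c * c = 1)
    (hrel : mulUSubV (inU e * inV e - σ • (inV e * inU e)) =
      c • ((inV e - inU e) * (inV e - inU e))) :
    (1 - σ) • ((inV e - inU e) * (inV e - inU e)) = 0 := by
  set S := inU e * inV e - σ • (inV e * inU e)
  set Q := (inV e - inU e) * (inV e - inU e)
  have hrel' : ∀ a b, c • cf2 Q a b = cf2 S (a + 1) b - cf2 S a (b + 1) := fun a b => by
    rw [← cf2_zsmul, ← hrel, cf2_mulUSubV]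
  refine ext_cf2 fun a b => ?_
  have hswap : c • cf2 Q a b = σ • (c • cf2 Q a b) :=
    calc c • cf2 Q a b = cf2 S (b + 1) a - cf2 S b (a + 1) := by
          rw [← cf2_inV_sub_inU_mul_self_comm, hrel']
      _ = σ • (cf2 S (a + 1) b - cf2 S a (b + 1)) := by
          rw [cf2_inU_mul_inV_sub_smul_comm hσ e a (b + 1),
            cf2_inU_mul_inV_sub_smul_comm hσ e (a + 1) b, smul_sub, neg_smul, neg_smul]
          abel
      _ = σ • (c • cf2 Q a b) := by rw [hrel']
  calc cf2 ((1 - σ) • Q) a b = (c * c * (1 - σ)) • cf2 Q a b := by rw [hc, one_mul, cf2_zsmul]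
    _ = c • (c • cf2 Q a b - σ • (c • cf2 Q a b)) := by
      rw [mul_assoc, mul_smul, mul_sub, mul_one, sub_smul, mul_comm c σ, mul_smul]
    _ = cf2 0 a b := by rw [← hswap, sub_self, smul_zero, cf2_zero]

theorem one_sub_smul_inU_mul_self_eq_zero {e : ℕ → A} (he0 : e 0 = 0) {σ : ℤ}
    (h : (1 - σ) • ((inV e - inU e) * (inV e - inU e)) = 0) :
    (1 - σ) • (inU e * inU e) = 0 := by
  refine ext_cf2 fun a b => ?_
  rcases eq_or_ne b 0 with rfl | hb
  · have h0a : cf2 (inU e * inU e) 0 a = 0 :=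
      X_dvd_iff.mp ((X_zero_dvd_inU he0).mul_right _) _ (by simp)
    have hQa : cf2 ((inV e - inU e) * (inV e - inU e)) a 0 = cf2 (inU e * inU e) a 0 := by
      rw [cf2_inV_sub_inU_mul_self, he0, h0a, mul_zero, zero_mul, sub_zero, sub_zero, add_zero]
    rw [cf2_zsmul, ← hQa, ← cf2_zsmul, h]
  · rw [cf2_zsmul, inU_mul_inU, cf2_inU, if_neg hb, smul_zero, cf2_zero]

theorem X_mul_X_dvd_inU_mul_inV_sub_smul {e : ℕ → A} (he0 : e 0 = 0) (σ : ℤ) :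
    X 0 * X 1 ∣ inU e * inV e - σ • (inV e * inU e) := by
  have hE := X_zero_dvd_inU he0
  have hF := X_one_dvd_inV he0
  refine dvd_sub (X_mul_X_dvd_mul hE hF) (dvd_zsmul_of_dvd σ ?_)
  rw [← (commute_X (X 1) 0).eq]
  exact X_mul_X_dvd_mul hF hE

theorem mulUSubV_inU_mul_pow_sub_smul_pow_mul {e : ℕ → A} (he0 : e 0 = 0) {σ c : ℤ}
    (hrel : mulUSubV (inU e * inV e - σ • (inV e * inU e)) =
      c • ((inV e - inU e) * (inV e - inU e)))
    (hσ : (1 - σ) • ((inV e - inU e) * (inV e - inU e)) = 0) (l : ℕ) :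
    mulUSubV (inU e * (inV e - inU e) ^ l - σ ^ l • ((inV e - inU e) ^ l * inU e)) =
      (c * l) • (inV e - inU e) ^ (l + 1) := by
  have hT : inU e * (inV e - inU e) - σ • ((inV e - inU e) * inU e) =
      inU e * inV e - σ • (inV e * inU e) := by
    rw [← sub_zero (inU e * inV e - _), ← one_sub_smul_inU_mul_self_eq_zero he0 hσ]
    simp only [mul_sub, sub_mul, smul_sub, sub_smul, one_smul]
    abel
  rw [← hT] at hrel
  refine (mulUSubV_mul_pow_sub_smul_pow_mul ?_ hrel hσ l).2
  rw [hT]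
  exact X_mul_X_dvd_inU_mul_inV_sub_smul he0 σ

end Series

theorem e_bracket_power_identity_general
    (m : ℕ) (A : Type*) [Ring A]
    (i : ℕ)
    (e : ℕ → A) (he0 : e 0 = 0)
    -- defining quadratic relation: (u−v)[e_i(u), e_i(v)] = (−1)^{|i+1|}(e_i(u) − e_i(v))²
    (hrel : ∀ a b : ℕ,
      cf2 (inU e * inV e -
        ((-1 : ℤ) ^ (((pnat m i + pnat m (i+1)) % 2) * ((pnat m i + pnat m (i+1)) % 2))) •
          (inV e * inU e)) (a+1) b -
      cf2 (inU e * inV e -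
        ((-1 : ℤ) ^ (((pnat m i + pnat m (i+1)) % 2) * ((pnat m i + pnat m (i+1)) % 2))) •
          (inV e * inU e)) a (b+1) =
      ((-1 : ℤ) ^ (pnat m (i+1))) • cf2 ((inU e - inV e) * (inU e - inV e)) a b) :
    ∀ (l : ℕ) (a b : ℕ),
      (cf2 (inU e * (inV e - inU e) ^ l -
          ((-1 : ℤ) ^ (((pnat m i + pnat m (i+1)) % 2) * l)) •
            ((inV e - inU e) ^ l * inU e)) (a+1) b -
        cf2 (inU e * (inV e - inU e) ^ l -
          ((-1 : ℤ) ^ (((pnat m i + pnat m (i+1)) % 2) * l)) •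
            ((inV e - inU e) ^ l * inU e)) a (b+1) =
        ((-1 : ℤ) ^ (pnat m (i+1)) * l) • cf2 ((inV e - inU e) ^ (l+1)) a b) ∧
      (cf2 (inU e * (inV e - inU e) ^ l -
          ((-1 : ℤ) ^ (((pnat m i + pnat m (i+1)) % 2) * l)) •
            ((inV e - inU e) ^ l * inU e)) (a+1) b -
        cf2 (inU e * (inV e - inU e) ^ l -
          ((-1 : ℤ) ^ (((pnat m i + pnat m (i+1)) % 2) * l)) •
            ((inV e - inU e) ^ l * inU e)) a (b+1) =
        ((-1 : ℤ) ^ (pnat m i) * l) • cf2 ((inV e - inU e) ^ (l+1)) a b) := by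
  set ε := (pnat m i + pnat m (i + 1)) % 2
  have hεε : ε * ε = ε := by
    rcases Nat.mod_two_eq_zero_or_one (pnat m i + pnat m (i + 1)) with h | h <;> simp [ε, h]
  have hsign : (-1 : ℤ) ^ pnat m i = (-1) ^ pnat m (i + 1) * (-1) ^ ε := by
    simp only [ε, pnat]
    split_ifs <;> norm_num
  have hunit : ∀ k : ℕ, (-1 : ℤ) ^ k * (-1) ^ k = 1 := fun k => by rw [← mul_pow]; norm_num
  have hsq : (inU e - inV e) * (inU e - inV e) = (inV e - inU e) * (inV e - inU e) := by
    noncomm_ring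
  simp only [hεε, hsq] at hrel
  have hrel' : mulUSubV (inU e * inV e - (-1 : ℤ) ^ ε • (inV e * inU e)) =
      (-1 : ℤ) ^ pnat m (i + 1) • ((inV e - inU e) * (inV e - inU e)) :=
    ext_cf2 fun a b => by rw [cf2_mulUSubV, cf2_zsmul, hrel]
  have hσ := one_sub_smul_inV_sub_inU_mul_self_eq_zero (hunit _) (hunit _) hrel'
  intro l a b
  rw [pow_mul, ← cf2_mulUSubV, mulUSubV_inU_mul_pow_sub_smul_pow_mul he0 hrel' hσ, hsign,
    ← cf2_zsmul, ← cf2_zsmul, mul_mul_natCast_smul_pow_succ hσ]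
  exact ⟨rfl, rfl⟩

/-- in Y_{m|n}[[u^{-1}, v^{-1}]], for every i = 1,…,m+n−1 and every l ≥ 0,
(u−v)[e_i(u), (e_i(v) − e_i(u))^l] = (−1)^{|i+1|} l (e_i(v) − e_i(u))^{l+1}
                                   = (−1)^{|i|} l (e_i(v) − e_i(u))^{l+1}.
Equality of series multiplied by (u−v) is expressed coefficientwise: the coefficient of
u^{-a}v^{-b} of (u−v)F is F_{a+1,b} − F_{a,b+1}.  The element e_i(u) has parity
ε = |i|+|i+1| (mod 2), so the supercommutator with the parity-εl element
(e_i(v)−e_i(u))^l carries the sign (−1)^{εl}. -/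
theorem e_bracket_power_identity
    (kk : Type*) [Field kk] (p : ℕ) [CharP kk p] (hp : 0 < p)
    (m n : ℕ) (A : Type*) [Ring A] [Algebra kk A]
    (i : ℕ) (hi1 : 1 ≤ i) (hi2 : i ≤ m + n - 1)
    (e : ℕ → A) (he0 : e 0 = 0)
    -- defining quadratic relation: (u−v)[e_i(u), e_i(v)] = (−1)^{|i+1|}(e_i(u) − e_i(v))²
    (hrel : ∀ a b : ℕ,
      cf2 (inU e * inV e -
        ((-1 : ℤ) ^ (((pnat m i + pnat m (i+1)) % 2) * ((pnat m i + pnat m (i+1)) % 2))) •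
          (inV e * inU e)) (a+1) b -
      cf2 (inU e * inV e -
        ((-1 : ℤ) ^ (((pnat m i + pnat m (i+1)) % 2) * ((pnat m i + pnat m (i+1)) % 2))) •
          (inV e * inU e)) a (b+1) =
      ((-1 : ℤ) ^ (pnat m (i+1))) • cf2 ((inU e - inV e) * (inU e - inV e)) a b) :
    ∀ (l : ℕ) (a b : ℕ),
      (cf2 (inU e * (inV e - inU e) ^ l -
          ((-1 : ℤ) ^ (((pnat m i + pnat m (i+1)) % 2) * l)) •
            ((inV e - inU e) ^ l * inU e)) (a+1) b -
        cf2 (inU e * (inV e - inU e) ^ l -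
          ((-1 : ℤ) ^ (((pnat m i + pnat m (i+1)) % 2) * l)) •
            ((inV e - inU e) ^ l * inU e)) a (b+1) =
        ((-1 : ℤ) ^ (pnat m (i+1)) * l) • cf2 ((inV e - inU e) ^ (l+1)) a b) ∧
      (cf2 (inU e * (inV e - inU e) ^ l -
          ((-1 : ℤ) ^ (((pnat m i + pnat m (i+1)) % 2) * l)) •
            ((inV e - inU e) ^ l * inU e)) (a+1) b -
        cf2 (inU e * (inV e - inU e) ^ l -
          ((-1 : ℤ) ^ (((pnat m i + pnat m (i+1)) % 2) * l)) •
            ((inV e - inU e) ^ l * inU e)) a (b+1) =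
        ((-1 : ℤ) ^ (pnat m i) * l) • cf2 ((inV e - inU e) ^ (l+1)) a b) :=
  e_bracket_power_identity_general m A i e he0 hrel
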